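/- Let C be a non-contracting strict globular ω-category, and x, y : Δⁿ → PC ω-functors with T(x) = S(y). If for some face σ₀ of Δⁿ the morphism x(σ₀) *₀ y(σ₀) is 0-dimensional in C, then for every face σ of Δⁿ, x(σ) *₀ y(σ) is the 0-morphism S(x) = T(y); i.e., x*y is the constant map with value S(x). -/

import Mathlib

/-- A strict globular ω-category: a set `A` with a family of compositions,
source and target maps `(*ₙ, sₙ, tₙ)` satisfying the 1-category axioms in each
degree, the globular axioms, the interchange law, the compatibility of
sources/targets with compositions in different degrees, and finiteness of
dimension.  `comp n x y` is only meaningful when `tgt n x = src n y`. -/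
structure OmegaCat where
  A : Type
  comp : ℕ → A → A → A
  src : ℕ → A → A
  tgt : ℕ → A → A
  src_comp : ∀ n x y, tgt n x = src n y → src n (comp n x y) = src n x
  tgt_comp : ∀ n x y, tgt n x = src n y → tgt n (comp n x y) = tgt n y
  comp_src_unit : ∀ n x, comp n (src n x) x = x
  comp_tgt_unit : ∀ n x, comp n x (tgt n x) = x
  comp_assoc : ∀ n x y z, tgt n x = src n y → tgt n y = src n z →
    comp n (comp n x y) z = comp n x (comp n y z)
  src_src_le : ∀ i j, j ≤ i → ∀ x, src i (src j x) = src j x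
  tgt_src_le : ∀ i j, j ≤ i → ∀ x, tgt i (src j x) = src j x
  src_tgt_le : ∀ i j, j ≤ i → ∀ x, src i (tgt j x) = tgt j x
  tgt_tgt_le : ∀ i j, j ≤ i → ∀ x, tgt i (tgt j x) = tgt j x
  src_src_lt : ∀ i j, i < j → ∀ x, src i (src j x) = src i x
  src_tgt_lt : ∀ i j, i < j → ∀ x, src i (tgt j x) = src i x
  tgt_src_lt : ∀ i j, i < j → ∀ x, tgt i (src j x) = tgt i x
  tgt_tgt_lt : ∀ i j, i < j → ∀ x, tgt i (tgt j x) = tgt i x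
  interchange : ∀ p q, p < q → ∀ x y z t,
    tgt p x = src p y → tgt p z = src p t → tgt q x = src q z → tgt q y = src q t →
    comp q (comp p x y) (comp p z t) = comp p (comp q x z) (comp q y t)
  src_comp_ne : ∀ i j, i ≠ j → ∀ x y, tgt j x = src j y →
    src i (comp j x y) = comp j (src i x) (src i y)
  tgt_comp_ne : ∀ i j, i ≠ j → ∀ x y, tgt j x = src j y →
    tgt i (comp j x y) = comp j (tgt i x) (tgt i y)
  finiteDim : ∀ x, ∃ n, src n x = x ∧ tgt n x = x

namespace OmegaCat

variable (C : OmegaCat)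

/-- `x` has dimension at most `n`. -/
def dimLE (n : ℕ) (x : C.A) : Prop := C.src n x = x ∧ C.tgt n x = x

/-- `x` has dimension at least 1 (strictly positive dimension). -/
def PosDim (x : C.A) : Prop := ¬ C.dimLE 0 x

/-- `x` is exactly 1-dimensional. -/
def OneDim (x : C.A) : Prop := C.dimLE 1 x ∧ ¬ C.dimLE 0 x

/-- `s₁` and `t₁` are non-contracting: for `x` of dimension ≥ 1, `s₁ x` and
`t₁ x` are 1-dimensional. -/
def NonContracting : Prop :=
  ∀ x : C.A, C.PosDim x → C.OneDim (C.src 1 x) ∧ C.OneDim (C.tgt 1 x)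

end OmegaCat

/-- A face of the `n`-simplex: a nonempty strictly increasing sequence in
`{0, …, n}`, encoded as a nonempty subset of `Fin (n+1)`. -/
def SimplexFace (n : ℕ) : Type := {s : Finset (Fin (n+1)) // s.Nonempty}

/-- The face obtained from `σ` by deleting the element in position `i`
(positions in the increasing enumeration of `σ`, counted from 0). -/
def delPos {n : ℕ} (σ : Finset (Fin (n+1))) (i : ℕ) : Finset (Fin (n+1)) :=
  ((σ.sort (· ≤ ·)).eraseIdx i).toFinset

/-- `Gen C S x`: `x` is an iterated composite of elements of `S` in the
ω-category `C`. -/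
inductive Gen (C : OmegaCat) (S : Set C.A) : C.A → Prop
  | of {x : C.A} : x ∈ S → Gen C S x
  | cmp {p : ℕ} {x y : C.A} : Gen C S x → Gen C S y → C.tgt p x = C.src p y →
      Gen C S (C.comp p x y)

/-- A presentation of Street's free ω-category `Δⁿ` generated by the faces of
the `n`-simplex: an ω-category `D` with an injection `R` of the faces, in which
every element is a composite of faces, `R σ` has the dimension of `σ`, and the
`(p-1)`-source (resp. target) of a `p`-dimensional face `R σ` is a composite of
the subfaces of the faces obtained from `σ` by removing one element in odd
(resp. even) position. -/
structure SimplexStruct (n : ℕ) where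
  D : OmegaCat
  R : SimplexFace n → D.A
  inj : Function.Injective R
  dim_le : ∀ σ : SimplexFace n, D.dimLE (σ.1.card - 1) (R σ)
  dim_exact : ∀ σ : SimplexFace n, 2 ≤ σ.1.card → ¬ D.dimLE (σ.1.card - 2) (R σ)
  src_boundary : ∀ σ : SimplexFace n, 2 ≤ σ.1.card →
    Gen D {y | ∃ τ : SimplexFace n,
        (∃ i, i < σ.1.card ∧ Odd i ∧ τ.1 ⊆ delPos σ.1 i) ∧ y = R τ}
      (D.src (σ.1.card - 2) (R σ))
  tgt_boundary : ∀ σ : SimplexFace n, 2 ≤ σ.1.card →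
    Gen D {y | ∃ τ : SimplexFace n,
        (∃ i, i < σ.1.card ∧ Even i ∧ τ.1 ⊆ delPos σ.1 i) ∧ y = R τ}
      (D.tgt (σ.1.card - 2) (R σ))
  generates : ∀ x : D.A, Gen D (Set.range R) x

/-- An ω-functor from `D` to the path ω-category `PC` of `C`: a map landing in
the morphisms of strictly positive dimension, sending the `m`-source,
`m`-target and `*ₘ`-composition of `D` to the `(m+1)`-source, `(m+1)`-target
and `*ₘ₊₁`-composition of `C`. -/
structure ToPathFunctor (D C : OmegaCat) where
  f : D.A → C.A
  pos : ∀ d, C.PosDim (f d)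
  map_src : ∀ m d, f (D.src m d) = C.src (m+1) (f d)
  map_tgt : ∀ m d, f (D.tgt m d) = C.tgt (m+1) (f d)
  map_comp : ∀ m a b, D.tgt m a = D.src m b →
    f (D.comp m a b) = C.comp (m+1) (f a) (f b)


/-! The pointwise composite `z = x *₀ y` is again a functor `Δⁿ → PC`, except that it may
take `0`-dimensional values (hence `ShiftFunctor` below). For a `0`-dimensional `z₀`,
non-contractingness makes `z d = z₀` invariant under taking sources and targets in `Δⁿ` and
under composing and decomposing. By induction over the boundary presentation of the faces,
`z σ = z₀` thus holds for a face iff it holds for a vertex, and each edge of `Δⁿ` makes its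
two end vertices equivalent. -/

namespace OmegaCat

variable {C : OmegaCat}

lemma src_src_of_le {i j : ℕ} (hij : i ≤ j) (x : C.A) : C.src i (C.src j x) = C.src i x := by
  rcases hij.lt_or_eq with hij | rfl
  · exact C.src_src_lt i j hij x
  · exact C.src_src_le i i le_rfl x

lemma tgt_tgt_of_le {i j : ℕ} (hij : i ≤ j) (x : C.A) : C.tgt i (C.tgt j x) = C.tgt i x := by
  rcases hij.lt_or_eq with hij | rfl
  · exact C.tgt_tgt_lt i j hij x
  · exact C.tgt_tgt_le i i le_rfl x

lemma dimLE.src_eq {z : C.A} (hz : C.dimLE 0 z) (k : ℕ) : C.src k z = z := by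
  rw [← hz.1, C.src_src_le k 0 k.zero_le]

lemma dimLE.tgt_eq {z : C.A} (hz : C.dimLE 0 z) (k : ℕ) : C.tgt k z = z := by
  rw [← hz.1, C.tgt_src_le k 0 k.zero_le]

lemma dimLE.comp_self {z : C.A} (hz : C.dimLE 0 z) (k : ℕ) : C.comp k z z = z := by
  nth_rewrite 1 [← hz.src_eq k]
  exact C.comp_src_unit k z

lemma src_succ_eq_iff (hC : C.NonContracting) {z : C.A} (hz : C.dimLE 0 z) (m : ℕ) {w : C.A} :
    C.src (m+1) w = z ↔ w = z := by
  refine ⟨fun h => ?_, fun h => h ▸ hz.src_eq (m+1)⟩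
  have hw : C.dimLE 0 w := by
    by_contra hw
    refine (hC w hw).1.2 ?_
    rwa [← C.src_src_of_le (Nat.le_add_left 1 m), h, hz.src_eq]
  rwa [hw.src_eq] at h

lemma tgt_succ_eq_iff (hC : C.NonContracting) {z : C.A} (hz : C.dimLE 0 z) (m : ℕ) {w : C.A} :
    C.tgt (m+1) w = z ↔ w = z := by
  refine ⟨fun h => ?_, fun h => h ▸ hz.tgt_eq (m+1)⟩
  have hw : C.dimLE 0 w := by
    by_contra hw
    refine (hC w hw).2.2 ?_
    rwa [← C.tgt_tgt_of_le (Nat.le_add_left 1 m), h, hz.tgt_eq]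
  rwa [hw.tgt_eq] at h

end OmegaCat

structure ShiftFunctor (D C : OmegaCat) where
  f : D.A → C.A
  map_src : ∀ m d, f (D.src m d) = C.src (m+1) (f d)
  map_tgt : ∀ m d, f (D.tgt m d) = C.tgt (m+1) (f d)
  map_comp : ∀ m a b, D.tgt m a = D.src m b →
    f (D.comp m a b) = C.comp (m+1) (f a) (f b)

def ToPathFunctor.comp₀ {D C : OmegaCat} (x y : ToPathFunctor D C)
    (hT : ∀ d, C.tgt 0 (x.f d) = C.src 0 (y.f d)) : ShiftFunctor D C where
  f d := C.comp 0 (x.f d) (y.f d)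
  map_src m d := by
    rw [x.map_src, y.map_src, C.src_comp_ne (m+1) 0 (by omega) _ _ (hT d)]
  map_tgt m d := by
    rw [x.map_tgt, y.map_tgt, C.tgt_comp_ne (m+1) 0 (by omega) _ _ (hT d)]
  map_comp m a b hab := by
    have hx : C.tgt (m+1) (x.f a) = C.src (m+1) (x.f b) := by
      rw [← x.map_tgt, ← x.map_src, hab]
    have hy : C.tgt (m+1) (y.f a) = C.src (m+1) (y.f b) := by
      rw [← y.map_tgt, ← y.map_src, hab]
    rw [x.map_comp m a b hab, y.map_comp m a b hab,
      C.interchange 0 (m+1) (by omega) _ _ _ _ (hT a) (hT b) hx hy]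

namespace ShiftFunctor

variable {D C : OmegaCat} (F : ShiftFunctor D C) (hC : C.NonContracting) {z : C.A}
  (hz : C.dimLE 0 z)
include hC hz

lemma map_src_eq_iff (m : ℕ) (d : D.A) : F.f (D.src m d) = z ↔ F.f d = z := by
  rw [F.map_src, C.src_succ_eq_iff hC hz]

lemma map_tgt_eq_iff (m : ℕ) (d : D.A) : F.f (D.tgt m d) = z ↔ F.f d = z := by
  rw [F.map_tgt, C.tgt_succ_eq_iff hC hz]

lemma map_comp_eq_iff {p : ℕ} {a b : D.A} (hab : D.tgt p a = D.src p b) :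
    F.f (D.comp p a b) = z ↔ F.f a = z ∧ F.f b = z := by
  refine ⟨fun h => ⟨?_, ?_⟩, fun ⟨ha, hb⟩ => ?_⟩
  · rw [← F.map_src_eq_iff hC hz p, ← D.src_comp p a b hab, F.map_src_eq_iff hC hz, h]
  · rw [← F.map_tgt_eq_iff hC hz p, ← D.tgt_comp p a b hab, F.map_tgt_eq_iff hC hz, h]
  · rw [F.map_comp p a b hab, ha, hb, hz.comp_self]

lemma map_eq_iff_of_gen {G : Set D.A} {d : D.A} (hd : Gen D G d) {Q : Prop}
    (hG : ∀ s ∈ G, F.f s = z ↔ Q) : F.f d = z ↔ Q := by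
  induction hd with
  | of hs => exact hG _ hs
  | cmp _ _ hab iha ihb => rw [F.map_comp_eq_iff hC hz hab, iha, ihb, and_self]

end ShiftFunctor

namespace SimplexFace

def vertex {n : ℕ} (v : Fin (n+1)) : SimplexFace n := ⟨{v}, Finset.singleton_nonempty v⟩

lemma eq_vertex_of_subset {n : ℕ} {τ : SimplexFace n} {v : Fin (n+1)} (h : τ.1 ⊆ {v}) :
    τ = vertex v :=
  Subtype.ext ((Finset.subset_singleton_iff.mp h).resolve_left τ.2.ne_empty)

end SimplexFace

lemma delPos_card_lt {n : ℕ} {σ : Finset (Fin (n+1))} {i : ℕ} (hi : i < σ.card) :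
    (delPos σ i).card < σ.card :=
  calc (delPos σ i).card ≤ ((σ.sort (· ≤ ·)).eraseIdx i).length := List.toFinset_card_le _
    _ = σ.card - 1 := by simp [List.length_eraseIdx, Finset.length_sort, hi]
    _ < σ.card := by omega

lemma sort_pair {n : ℕ} {a b : Fin (n+1)} (h : a < b) :
    Finset.sort ({a, b} : Finset (Fin (n+1))) (· ≤ ·) = [a, b] := by
  rw [Finset.sort_insert (r := (· ≤ ·)) (a := a) (s := {b}) (by simp [h.le]) (by simp [h.ne]),
    Finset.sort_singleton]

lemma delPos_pair_zero {n : ℕ} {a b : Fin (n+1)} (h : a < b) : delPos {a, b} 0 = {b} := by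
  simp [delPos, sort_pair h]

lemma delPos_pair_one {n : ℕ} {a b : Fin (n+1)} (h : a < b) : delPos {a, b} 1 = {a} := by
  simp [delPos, sort_pair h]

namespace SimplexStruct

variable {n : ℕ} (S : SimplexStruct n) {C : OmegaCat} (F : ShiftFunctor S.D C)
  (hC : C.NonContracting) {z : C.A} (hz : C.dimLE 0 z)
include hC hz

lemma map_vertex_eq_iff_of_lt {a b : Fin (n+1)} (hab : a < b) :
    F.f (S.R (.vertex a)) = z ↔ F.f (S.R (.vertex b)) = z := by
  let e : SimplexFace n := ⟨{a, b}, Finset.insert_nonempty a {b}⟩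
  have hcard : e.1.card = 2 := Finset.card_pair hab.ne
  calc F.f (S.R (.vertex a)) = z ↔ F.f (S.D.src (e.1.card - 2) (S.R e)) = z := by
        refine (F.map_eq_iff_of_gen hC hz (S.src_boundary e hcard.ge) ?_).symm
        rintro _ ⟨τ, ⟨i, hi, hodd, hτ⟩, rfl⟩
        obtain rfl : i = 1 := by rw [Nat.odd_iff] at hodd; omega
        rw [SimplexFace.eq_vertex_of_subset (hτ.trans (delPos_pair_one hab).subset)]
    _ ↔ F.f (S.D.tgt (e.1.card - 2) (S.R e)) = z := by
        rw [F.map_src_eq_iff hC hz, F.map_tgt_eq_iff hC hz]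
    _ ↔ F.f (S.R (.vertex b)) = z := by
        refine F.map_eq_iff_of_gen hC hz (S.tgt_boundary e hcard.ge) ?_
        rintro _ ⟨τ, ⟨i, hi, heven, hτ⟩, rfl⟩
        obtain rfl : i = 0 := by rw [Nat.even_iff] at heven; omega
        rw [SimplexFace.eq_vertex_of_subset (hτ.trans (delPos_pair_zero hab).subset)]

lemma map_vertex_eq_iff (a b : Fin (n+1)) :
    F.f (S.R (.vertex a)) = z ↔ F.f (S.R (.vertex b)) = z := by
  rcases lt_trichotomy a b with h | rfl | h
  · exact S.map_vertex_eq_iff_of_lt F hC hz h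
  · rfl
  · exact (S.map_vertex_eq_iff_of_lt F hC hz h).symm

lemma map_face_eq_iff (v : Fin (n+1)) (σ : SimplexFace n) :
    F.f (S.R σ) = z ↔ F.f (S.R (.vertex v)) = z := by
  induction h : σ.1.card using Nat.strong_induction_on generalizing σ with
  | _ k ih =>
    rcases Nat.lt_or_ge σ.1.card 2 with hσ | hσ
    · obtain ⟨w, hw⟩ := (Finset.card_eq_one (s := σ.1)).mp (by have := σ.2.card_pos; omega)
      rw [show σ = .vertex w from Subtype.ext hw]
      exact S.map_vertex_eq_iff F hC hz w v
    · rw [← F.map_src_eq_iff hC hz (σ.1.card - 2)]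
      refine F.map_eq_iff_of_gen hC hz (S.src_boundary σ hσ) ?_
      rintro _ ⟨τ, ⟨i, hi, -, hτ⟩, rfl⟩
      exact ih _ (h ▸ (Finset.card_le_card hτ).trans_lt (delPos_card_lt hi)) τ rfl

end SimplexStruct

/-- If `x, y : Δⁿ → PC` are ω-functors with `T(x) = S(y)` and for some face
`σ₀` the composite `x(σ₀) *₀ y(σ₀)` is `0`-dimensional, then for every face
`σ`, `x(σ) *₀ y(σ)` is the `0`-morphism `S(x) = T(y)`: the map `x*y` is
constant with value `S(x)`. -/
theorem stmt10 (n : ℕ) (S : SimplexStruct n) (C : OmegaCat)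
    (hC : C.NonContracting) (x y : ToPathFunctor S.D C)
    (hT : ∀ d d' : S.D.A, C.tgt 0 (x.f d) = C.src 0 (y.f d'))
    (σ₀ : SimplexFace n)
    (h0 : C.dimLE 0 (C.comp 0 (x.f (S.R σ₀)) (y.f (S.R σ₀)))) :
    ∀ σ τ : SimplexFace n,
      C.comp 0 (x.f (S.R σ)) (y.f (S.R σ)) = C.src 0 (x.f (S.R τ)) ∧
      C.src 0 (x.f (S.R τ)) = C.tgt 0 (y.f (S.R τ)) := by
  set F := x.comp₀ y fun d => hT d d
  set z₀ := F.f (S.R σ₀)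
  have hz : C.dimLE 0 z₀ := h0
  have hconst (σ : SimplexFace n) : F.f (S.R σ) = z₀ :=
    ((S.map_face_eq_iff F hC hz 0 σ).trans (S.map_face_eq_iff F hC hz 0 σ₀).symm).mpr rfl
  have hsrc (τ : SimplexFace n) : C.src 0 (x.f (S.R τ)) = z₀ := by
    rw [← C.src_comp 0 _ _ (hT (S.R τ) (S.R τ))]
    exact (congrArg (C.src 0) (hconst τ)).trans hz.1
  have htgt (τ : SimplexFace n) : C.tgt 0 (y.f (S.R τ)) = z₀ := by
    rw [← C.tgt_comp 0 _ _ (hT (S.R τ) (S.R τ))]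
    exact (congrArg (C.tgt 0) (hconst τ)).trans hz.2
  exact fun σ τ => ⟨(hconst σ).trans (hsrc τ).symm, (hsrc τ).trans (htgt τ).symm⟩
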